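/- arXiv:1610.05247 — 4 statements merged into one kernel-verified Lean document; each statement's English description precedes it below -/
import Mathlib

section
/- Let H be a real Hilbert space and Φ : ℝ^d → H a Fréchet-differentiable map, defining the kernel k(x,y) = ⟨Φ(x), Φ(y)⟩_H and its partial derivatives ∂_{x_a} k(x,y) = ⟨DΦ(x)e_a, Φ(y)⟩_H, ∂_{y_a} k(x,y) = ⟨Φ(x), DΦ(y)e_a⟩_H, and ∂²_{x_a y_a} k(x,y) = ⟨DΦ(x)e_a, DΦ(y)e_a⟩_H, where DΦ(x) is the Fréchet derivative of Φ at x and (e_a)_{a=1}^d is the standard basis of ℝ^d. Let s : ℝ^d → ℝ^d be any function, and define the Steinalized kernel k_p(x,y) = s(x)^⊤ s(y) k(x,y) + ∑_{a=1}^d s(x)_a ∂_{y_a} k(x,y) + ∑_{a=1}^d s(y)_a ∂_{x_a} k(x,y) + ∑_{a=1}^d ∂²_{x_a y_a} k(x,y). Then k_p is positive definite: for all n, all points x_1,…,x_n ∈ ℝ^d, and all c_1,…,c_n ∈ ℝ, ∑_{i=1}^n ∑_{j=1}^n c_i c_j k_p(x_i, x_j) ≥ 0. -/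
open scoped RealInnerProductSpace

/-- **Positive definiteness of the Steinalized kernel** (equation (6) of the paper).
The base kernel is `k(x,y) = ⟪Φ x, Φ y⟫` for a Fréchet-differentiable feature map
`Φ : ℝ^d → H`; its partial derivatives are expressed via the Fréchet derivative `fderiv ℝ Φ`
applied to the standard basis vectors `EuclideanSpace.single a 1`.  For any function
`s : ℝ^d → ℝ^d` (playing the role of the score function), the Steinalized kernel `kp` is
positive definite: all quadratic forms built from it are non-negative. -/
theorem stmt2 {d : ℕ} {H : Type*} [NormedAddCommGroup H] [InnerProductSpace ℝ H]
    (Φ : EuclideanSpace ℝ (Fin d) → H) (hΦ : Differentiable ℝ Φ)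
    (s : EuclideanSpace ℝ (Fin d) → Fin d → ℝ)
    (kp : EuclideanSpace ℝ (Fin d) → EuclideanSpace ℝ (Fin d) → ℝ)
    (hkp : ∀ x y, kp x y =
      (∑ a, s x a * s y a) * ⟪Φ x, Φ y⟫
      + (∑ a, s x a * ⟪Φ x, fderiv ℝ Φ y (EuclideanSpace.single a 1)⟫)
      + (∑ a, s y a * ⟪fderiv ℝ Φ x (EuclideanSpace.single a 1), Φ y⟫)
      + ∑ a, ⟪fderiv ℝ Φ x (EuclideanSpace.single a 1),
              fderiv ℝ Φ y (EuclideanSpace.single a 1)⟫)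
    (n : ℕ) (x : Fin n → EuclideanSpace ℝ (Fin d)) (c : Fin n → ℝ) :
    0 ≤ ∑ i, ∑ j, c i * c j * kp (x i) (x j) := by
  set Ψ : Fin d → EuclideanSpace ℝ (Fin d) → H :=
    fun a z => s z a • Φ z + fderiv ℝ Φ z (EuclideanSpace.single a 1) with hΨ
  have key : ∀ x y, kp x y = ∑ a, ⟪Ψ a x, Ψ a y⟫ := by
    intro x y
    rw [hkp]
    simp only [hΨ, inner_add_add_self, inner_add_left, inner_add_right,
      real_inner_smul_left, real_inner_smul_right, Finset.sum_add_distrib,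
      Finset.sum_mul, Finset.mul_sum]
    have h1 : ∑ a, s y a * (s x a * ⟪Φ x, Φ y⟫) = ∑ a, s x a * s y a * ⟪Φ x, Φ y⟫ :=
      Finset.sum_congr rfl fun a _ => by ring
    rw [h1]; ring
  calc (0:ℝ) ≤ ∑ a, ⟪∑ i, c i • Ψ a (x i), ∑ j, c j • Ψ a (x j)⟫ :=
        Finset.sum_nonneg fun a _ => real_inner_self_nonneg
    _ = ∑ i, ∑ j, c i * c j * kp (x i) (x j) := by
        simp only [key, inner_sum, sum_inner, real_inner_smul_left,
          real_inner_smul_right, Finset.mul_sum]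
        rw [Finset.sum_comm]
        refine Finset.sum_congr rfl fun i _ => ?_
        rw [Finset.sum_comm]
        refine Finset.sum_congr rfl fun j _ => ?_
        exact Finset.sum_congr rfl fun a _ => by rw [real_inner_comm]; ring
end

section
/- Let P and Q be probability measures on a measurable space X with P ≪ Q and Radon–Nikodym derivative w* = dP/dQ, with w* > 0 Q-almost everywhere. Let k_p : X × X → ℝ be measurable with: (i) ∫ w*(x') k_p(x, x') dQ(x') = 0 and ∫ w*(x) k_p(x, x') dQ(x) = 0 for Q-almost every x, x'; (ii) ∫ (w*)² dQ < ∞; (iii) ∫ |w*(x)² k_p(x,x)| dQ(x) < ∞; (iv) ∫∫ (w*(x) w*(x') k_p(x,x'))² dQ(x) dQ(x') < ∞. Let x_1, x_2, … be i.i.d. with law Q, and define the self-normalized importance weights w*_i = w*(x_i) / ∑_{j=1}^n w*(x_j). Then the sequence n · S({x_i, w*_i}, p) is bounded in probability: for every ε > 0 there is a constant C such that for all n, ℙ( n · ∑_{i,j=1}^n w*_i w*_j k_p(x_i, x_j) > C ) ≤ ε. -/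
/-!
Write `H a b = w a * w b * k_p a b` and `W = ∑ₖ w(xₖ)`. The statistic is `n (D + F) / W²` with
`D = ∑ᵢ H(xᵢ, xᵢ)` and `F = ∑_{i ≠ j} H(xᵢ, xⱼ)`. Since `E w = 1`, Chebyshev's inequality gives
`W ≥ n / 2` outside an event of probability `O(1 / n)`, and on that event the statistic is at
most `4 (D + F) / n`. Now `E |D| ≤ n E |H(x, x)|`, and because `H` integrates to zero in each
argument, in `E F²` every product `H(xᵢ, xⱼ) H(xₖ, xₗ)` with `{k, l} ≠ {i, j}` has mean zero
(integrate first over a variable that occurs only once), so `E F² ≤ 2 n² E H²`. Markov's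
inequality bounds the tail uniformly for large `n`; each of the finitely many remaining `n`
has its own finite tail bound.
-/

open MeasureTheory ProbabilityTheory Finset Filter Topology Function

lemma le_abs_or_sq_le_sq_of_lt_mul_div {n C W D F : ℝ} (hn : 0 < n) (hC : 0 < C)
    (hW : n / 2 ≤ W) (h : C < n * ((D + F) / W ^ 2)) :
    C * n / 8 ≤ |D| ∨ (C * n / 8) ^ 2 ≤ F ^ 2 := by
  have hW0 : 0 < W := by linarith
  rw [mul_div_assoc', lt_div_iff₀ (by positivity)] at h
  have hW2 : n ^ 2 / 4 ≤ W ^ 2 := by nlinarith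
  have hDF : C * n / 4 < D + F := by nlinarith
  rcases le_or_gt (C * n / 8) D with hD | hD
  · exact Or.inl (hD.trans (le_abs_self D))
  · have hF : C * n / 8 < F := by linarith
    exact Or.inr (pow_le_pow_left₀ (by positivity) hF.le 2)

lemma Finset.sum_sum_div_mul_div_mul {ι : Type*} (s : Finset ι) (v : ι → ℝ) (k : ι → ι → ℝ) :
    ∑ i ∈ s, ∑ j ∈ s, (v i / ∑ l ∈ s, v l) * (v j / ∑ l ∈ s, v l) * k i j
      = (∑ i ∈ s, ∑ j ∈ s, v i * v j * k i j) / (∑ l ∈ s, v l) ^ 2 := by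
  simp only [sum_div]
  exact sum_congr rfl fun i _ => sum_congr rfl fun j _ => by ring

lemma Finset.sum_sum_eq_sum_add_sum_offDiag {ι M : Type*} [DecidableEq ι] [AddCommMonoid M]
    (s : Finset ι) (f : ι → ι → M) :
    ∑ i ∈ s, ∑ j ∈ s, f i j = ∑ i ∈ s, f i i + ∑ p ∈ s.offDiag, f p.1 p.2 := by
  rw [← sum_product', ← diag_union_offDiag, sum_union (disjoint_diag_offDiag s), sum_diag]

lemma MeasureTheory.meas_ge_le_ofReal_div_of_integral_le {Ω : Type*} [MeasurableSpace Ω]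
    {μ : Measure Ω} [IsFiniteMeasure μ] {f : Ω → ℝ} (hf : Integrable f μ) (hf0 : 0 ≤ᵐ[μ] f)
    {c M : ℝ} (hc : 0 < c) (hM : ∫ ω, f ω ∂μ ≤ M) :
    μ {ω | c ≤ f ω} ≤ ENNReal.ofReal (M / c) := by
  rw [← ofReal_measureReal]
  refine ENNReal.ofReal_le_ofReal ((le_div_iff₀' hc).2 ?_)
  exact (mul_meas_ge_le_integral_of_nonneg hf0 hf c).trans hM

lemma MeasureTheory.integral_eq_one_of_withDensity {α : Type*} [MeasurableSpace α]
    {μ : Measure α} {f : α → ℝ} (hf : AEStronglyMeasurable f μ) (hf0 : 0 ≤ᵐ[μ] f)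
    [IsProbabilityMeasure (μ.withDensity fun x => ENNReal.ofReal (f x))] :
    ∫ x, f x ∂μ = 1 := by
  rw [integral_eq_lintegral_of_nonneg_ae hf0 hf, ← setLIntegral_univ,
    ← withDensity_apply _ MeasurableSet.univ, measure_univ, ENNReal.toReal_one]

lemma MeasureTheory.exists_measure_lt_le {Ω : Type*} [MeasurableSpace Ω] {μ : Measure Ω}
    [IsFiniteMeasure μ] {Y : Ω → ℝ} (hY : Measurable Y) {ε : ENNReal} (hε : 0 < ε) :
    ∃ C : ℝ, μ {ω | C < Y ω} ≤ ε := by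
  have hempty : ⋂ C : ℝ, {ω | C < Y ω} = ∅ :=
    Set.eq_empty_of_forall_notMem fun ω hω => lt_irrefl (Y ω) (Set.mem_iInter.1 hω (Y ω))
  have hlim := tendsto_measure_iInter_atTop (μ := μ) (s := fun C : ℝ => {ω | C < Y ω})
    (fun _ => (measurableSet_lt measurable_const hY).nullMeasurableSet)
    (fun _ _ hab _ hω => hab.trans_lt hω) ⟨0, measure_ne_top _ _⟩
  rw [hempty, measure_empty] at hlim
  exact (hlim.eventually (ge_mem_nhds hε)).exists

lemma MeasureTheory.exists_forall_measure_lt_le {Ω : ℕ → Type*} [∀ n, MeasurableSpace (Ω n)]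
    {μ : ∀ n, Measure (Ω n)} [∀ n, IsFiniteMeasure (μ n)] {Y : ∀ n, Ω n → ℝ}
    (hY : ∀ n, Measurable (Y n)) {ε : ENNReal} (hε : 0 < ε) {N : ℕ} {C : ℝ}
    (hC : ∀ n ≥ N, μ n {ω | C < Y n ω} ≤ ε) :
    ∃ C' : ℝ, ∀ n, μ n {ω | C' < Y n ω} ≤ ε := by
  choose c hc using fun n => exists_measure_lt_le (μ := μ n) (hY n) hε
  obtain ⟨C', hC'⟩ := (insert C ((range N).image c)).exists_le
  have hmono : ∀ n {a b : ℝ}, a ≤ b → μ n {ω | b < Y n ω} ≤ μ n {ω | a < Y n ω} :=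
    fun _ _ _ hab => measure_mono fun _ hω => hab.trans_lt hω
  refine ⟨C', fun n => ?_⟩
  rcases lt_or_ge n N with hn | hn
  · exact (hmono n (hC' _ (mem_insert_of_mem (mem_image_of_mem c (mem_range.2 hn))))).trans (hc n)
  · exact (hmono n (hC' _ (mem_insert_self _ _))).trans (hC n hn)

namespace ProbabilityTheory

lemma HasLaw.memLp_comp {Ω 𝓧 : Type*} {mΩ : MeasurableSpace Ω} {m𝓧 : MeasurableSpace 𝓧}
    {E : Type*} [NormedAddCommGroup E] {P : Measure Ω} {μ : Measure 𝓧} {X : Ω → 𝓧}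
    (hX : HasLaw X μ P) {f : 𝓧 → E} {p : ENNReal} (hf : MemLp f p μ) : MemLp (f ∘ X) p P :=
  (hX.map_eq ▸ hf).comp_of_map hX.aemeasurable

section Coordinates

variable {ι X : Type*} [MeasurableSpace X] (Q : Measure X) [IsProbabilityMeasure Q]
  [Fintype ι]

lemma iIndepFun_eval : iIndepFun (fun i (ω : ι → X) => ω i) (Measure.pi fun _ => Q) :=
  iIndepFun_pi (X := fun _ => id) fun _ => aemeasurable_id

lemma hasLaw_eval (i : ι) : HasLaw (fun ω : ι → X => ω i) Q (Measure.pi fun _ => Q) :=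
  (measurePreserving_eval (fun _ : ι => Q) i).hasLaw

lemma hasLaw_eval_pair {i j : ι} (hij : i ≠ j) :
    HasLaw (fun ω : ι → X => (ω i, ω j)) (Q.prod Q) (Measure.pi fun _ => Q) :=
  ((iIndepFun_eval Q).indepFun hij).hasLaw_prod (hasLaw_eval Q i) (hasLaw_eval Q j)

lemma hasLaw_eval_triple {s a b : ι} (has : a ≠ s) (hbs : b ≠ s) (hab : a ≠ b) :
    HasLaw (fun ω : ι → X => (ω s, (ω a, ω b))) (Q.prod (Q.prod Q)) (Measure.pi fun _ => Q) :=
  ((iIndepFun_eval Q).indepFun_prodMk (fun _ => measurable_pi_apply _) a b s has hbs).symm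
    |>.hasLaw_prod (hasLaw_eval Q s) (hasLaw_eval_pair Q hab)

end Coordinates

section Fubini

variable {α β γ : Type*} [MeasurableSpace α] [MeasurableSpace β] [MeasurableSpace γ]
  {μ : Measure α} {ν : Measure β} {ρ : Measure γ} [SFinite μ] [SFinite ν] [SFinite ρ]

lemma integral_prod_prod_mul_eq_zero {K : α → β → ℝ} {L : α → γ → ℝ}
    (hKL : Integrable (fun z : α × β × γ => K z.1 z.2.1 * L z.1 z.2.2) (μ.prod (ν.prod ρ)))
    (hK : ∀ᵐ s ∂μ, ∫ a, K s a ∂ν = 0) :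
    ∫ z : α × β × γ, K z.1 z.2.1 * L z.1 z.2.2 ∂(μ.prod (ν.prod ρ)) = 0 := by
  rw [integral_prod _ hKL]
  refine integral_eq_zero_of_ae ?_
  filter_upwards [hK] with s hs
  simp [integral_prod_mul (K s) (L s), hs]

lemma integral_prod_eq_zero_of_ae_integral_eq_zero {K : α → β → ℝ}
    (hK : Integrable (uncurry K) (μ.prod ν)) (hK0 : ∀ᵐ s ∂μ, ∫ a, K s a ∂ν = 0) :
    ∫ z, K z.1 z.2 ∂(μ.prod ν) = 0 :=
  (integral_prod _ hK).trans (integral_eq_zero_of_ae hK0)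

end Fubini

section DegenerateKernel

variable {ι X : Type*} [Fintype ι] [MeasurableSpace X] {Q : Measure X} [IsProbabilityMeasure Q]

lemma integral_eval_pair_mul_eval_pair_eq_zero_of_fst_eq {K L : X → X → ℝ}
    (hK : MemLp (uncurry K) 2 (Q.prod Q)) (hL : MemLp (uncurry L) 2 (Q.prod Q))
    (hK0 : ∀ᵐ s ∂Q, ∫ a, K s a ∂Q = 0) {s a b : ι} (has : a ≠ s) (hbs : b ≠ s) (hab : a ≠ b) :
    ∫ ω, K (ω s) (ω a) * L (ω s) (ω b) ∂(Measure.pi fun _ => Q) = 0 := by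
  have hKL : Integrable (fun z : X × X × X => K z.1 z.2.1 * L z.1 z.2.2) (Q.prod (Q.prod Q)) :=
    (hK.comp_measurePreserving ((MeasurePreserving.id Q).prod measurePreserving_fst))
      |>.integrable_mul
        (hL.comp_measurePreserving ((MeasurePreserving.id Q).prod measurePreserving_snd))
  exact ((hasLaw_eval_triple Q has hbs hab).integral_comp hKL.aestronglyMeasurable).trans
    (integral_prod_prod_mul_eq_zero hKL hK0)

lemma integral_eval_pair_mul_eval_pair_eq_zero_of_disjoint {H : X → X → ℝ}
    (hH : MemLp (uncurry H) 2 (Q.prod Q)) (hH0 : ∀ᵐ s ∂Q, ∫ a, H s a ∂Q = 0) {i j k l : ι}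
    (hik : i ≠ k) (hil : i ≠ l) (hjk : j ≠ k) (hjl : j ≠ l) (hij : i ≠ j) (hkl : k ≠ l) :
    ∫ ω, H (ω i) (ω j) * H (ω k) (ω l) ∂(Measure.pi fun _ => Q) = 0 := by
  have hlaw := ((iIndepFun_eval Q).indepFun_prodMk_prodMk (fun _ => measurable_pi_apply _)
    i j k l hik hil hjk hjl).hasLaw_prod (hasLaw_eval_pair Q hij) (hasLaw_eval_pair Q hkl)
  have hmeas : AEStronglyMeasurable (fun z : (X × X) × X × X => H z.1.1 z.1.2 * H z.2.1 z.2.2)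
      ((Q.prod Q).prod (Q.prod Q)) :=
    (hH.1.comp_measurePreserving measurePreserving_fst).mul
      (hH.1.comp_measurePreserving measurePreserving_snd)
  refine (hlaw.integral_comp hmeas).trans ?_
  rw [integral_prod_mul (fun p : X × X => H p.1 p.2) (fun p : X × X => H p.1 p.2)]
  exact mul_eq_zero_of_left
    (integral_prod_eq_zero_of_ae_integral_eq_zero (hH.integrable one_le_two) hH0) _

variable {H : X → X → ℝ}

lemma integral_eval_pair_mul_eval_pair_eq_zero (hH : MemLp (uncurry H) 2 (Q.prod Q))
    (hA : ∀ᵐ a ∂Q, ∫ b, H a b ∂Q = 0) (hB : ∀ᵐ b ∂Q, ∫ a, H a b ∂Q = 0)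
    {i j k l : ι} (hij : i ≠ j) (hkl : k ≠ l) (hp : (k, l) ≠ (i, j)) (hp' : (k, l) ≠ (j, i)) :
    ∫ ω, H (ω i) (ω j) * H (ω k) (ω l) ∂(Measure.pi fun _ => Q) = 0 := by
  have hHt : MemLp (uncurry (swap H)) 2 (Q.prod Q) :=
    hH.comp_measurePreserving Measure.measurePreserving_swap
  -- integrate first over the coordinate that occurs in only one factor; `swap H` is degenerate
  -- in its second argument by `hB`
  by_cases hik : i = k
  · subst hik
    exact integral_eval_pair_mul_eval_pair_eq_zero_of_fst_eq hH hH hA hij.symm hkl.symm (by grind)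
  by_cases hil : i = l
  · subst hil
    exact integral_eval_pair_mul_eval_pair_eq_zero_of_fst_eq (L := swap H) hH hHt hA hij.symm
      (Ne.symm hik) (by grind)
  by_cases hjk : j = k
  · subst hjk
    exact integral_eval_pair_mul_eval_pair_eq_zero_of_fst_eq (K := swap H) hHt hH hB hij
      hkl.symm hil
  by_cases hjl : j = l
  · subst hjl
    exact integral_eval_pair_mul_eval_pair_eq_zero_of_fst_eq (K := swap H) (L := swap H) hHt hHt
      hB hij (Ne.symm hjk) hik
  exact integral_eval_pair_mul_eval_pair_eq_zero_of_disjoint hH hA hik hil hjk hjl hij hkl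

lemma memLp_eval_pair (hH : MemLp (uncurry H) 2 (Q.prod Q)) {i j : ι} (hij : i ≠ j) :
    MemLp (fun ω : ι → X => H (ω i) (ω j)) 2 (Measure.pi fun _ => Q) :=
  (hasLaw_eval_pair Q hij).memLp_comp hH

lemma integral_eval_pair_mul_le (hH : MemLp (uncurry H) 2 (Q.prod Q)) {i j k l : ι}
    (hij : i ≠ j) (hkl : k ≠ l) :
    ∫ ω, H (ω i) (ω j) * H (ω k) (ω l) ∂(Measure.pi fun _ => Q)
      ≤ ∫ z, H z.1 z.2 ^ 2 ∂(Q.prod Q) := by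
  have hsq : ∀ {a b : ι}, a ≠ b →
      ∫ ω, H (ω a) (ω b) ^ 2 ∂(Measure.pi fun _ => Q) = ∫ z, H z.1 z.2 ^ 2 ∂(Q.prod Q) :=
    fun hab => (hasLaw_eval_pair Q hab).integral_comp (hH.integrable_sq.aestronglyMeasurable)
  have hp := memLp_eval_pair hH hij
  have hq := memLp_eval_pair hH hkl
  calc ∫ ω, H (ω i) (ω j) * H (ω k) (ω l) ∂(Measure.pi fun _ => Q)
      ≤ ∫ ω, (H (ω i) (ω j) ^ 2 + H (ω k) (ω l) ^ 2) / 2 ∂(Measure.pi fun _ => Q) :=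
        integral_mono (hp.integrable_mul hq) ((hp.integrable_sq.add hq.integrable_sq).div_const 2)
          fun ω => by nlinarith [sq_nonneg (H (ω i) (ω j) - H (ω k) (ω l))]
    _ = ∫ z, H z.1 z.2 ^ 2 ∂(Q.prod Q) := by
        rw [integral_div, integral_add hp.integrable_sq hq.integrable_sq, hsq hij, hsq hkl]
        ring

lemma memLp_sum_offDiag [DecidableEq ι] (hH : MemLp (uncurry H) 2 (Q.prod Q)) :
    MemLp (fun ω : ι → X => ∑ p ∈ univ.offDiag, H (ω p.1) (ω p.2)) 2
      (Measure.pi fun _ => Q) :=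
  memLp_finsetSum _ fun _ hp => memLp_eval_pair hH (mem_offDiag.1 hp).2.2

lemma integral_sum_offDiag_sq_le [DecidableEq ι] (hH : MemLp (uncurry H) 2 (Q.prod Q))
    (hA : ∀ᵐ a ∂Q, ∫ b, H a b ∂Q = 0) (hB : ∀ᵐ b ∂Q, ∫ a, H a b ∂Q = 0) :
    ∫ ω : ι → X, (∑ p ∈ univ.offDiag, H (ω p.1) (ω p.2)) ^ 2 ∂(Measure.pi fun _ => Q)
      ≤ 2 * Fintype.card ι ^ 2 * ∫ z, H z.1 z.2 ^ 2 ∂(Q.prod Q) := by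
  set V := ∫ z, H z.1 z.2 ^ 2 ∂(Q.prod Q)
  have hV : 0 ≤ V := integral_nonneg fun z => sq_nonneg _
  have hint : ∀ p ∈ univ.offDiag, ∀ q ∈ (univ : Finset ι).offDiag, Integrable
      (fun ω : ι → X => H (ω p.1) (ω p.2) * H (ω q.1) (ω q.2)) (Measure.pi fun _ => Q) :=
    fun p hp q hq => (memLp_eval_pair hH (mem_offDiag.1 hp).2.2).integrable_mul
      (memLp_eval_pair hH (mem_offDiag.1 hq).2.2)
  have hrow : ∀ p ∈ (univ : Finset ι).offDiag,
      ∑ q ∈ univ.offDiag, ∫ ω, H (ω p.1) (ω p.2) * H (ω q.1) (ω q.2) ∂(Measure.pi fun _ => Q)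
        ≤ 2 * V := by
    intro p hp
    have hp' := (mem_offDiag.1 hp).2.2
    have hsub : {p, p.swap} ⊆ (univ : Finset ι).offDiag := by grind
    rw [← sum_subset hsub fun q hq hq' => integral_eval_pair_mul_eval_pair_eq_zero hH hA hB hp'
      (mem_offDiag.1 hq).2.2 (by grind) (by grind)]
    calc _ ≤ ∑ q ∈ {p, p.swap}, V :=
          sum_le_sum fun q hq => integral_eval_pair_mul_le hH hp' (mem_offDiag.1 (hsub hq)).2.2
      _ ≤ 2 * V := by
          rw [sum_const, nsmul_eq_mul]
          gcongr
          exact_mod_cast card_le_two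
  calc ∫ ω, (∑ p ∈ univ.offDiag, H (ω p.1) (ω p.2)) ^ 2 ∂(Measure.pi fun _ => Q)
      = ∑ p ∈ univ.offDiag, ∑ q ∈ univ.offDiag,
          ∫ ω, H (ω p.1) (ω p.2) * H (ω q.1) (ω q.2) ∂(Measure.pi fun _ => Q) := by
        simp_rw [sq, sum_mul_sum]
        rw [integral_finsetSum _ fun p hp => integrable_finsetSum _ (hint p hp)]
        exact sum_congr rfl fun p hp => integral_finsetSum _ (hint p hp)
    _ ≤ ∑ p ∈ (univ : Finset ι).offDiag, 2 * V := sum_le_sum hrow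
    _ ≤ 2 * Fintype.card ι ^ 2 * V := by
        rw [sum_const, nsmul_eq_mul, ← mul_assoc, mul_comm _ (2 : ℝ)]
        gcongr
        exact_mod_cast (card_le_univ _).trans_eq (by simp [sq])

lemma integrable_sum_diag (hd : Integrable (fun x => H x x) Q) :
    Integrable (fun ω : ι → X => ∑ i, H (ω i) (ω i)) (Measure.pi fun _ => Q) :=
  integrable_finsetSum _ fun i _ =>
    (measurePreserving_eval (fun _ => Q) i).integrable_comp_of_integrable hd

lemma integral_abs_sum_diag_le (hd : Integrable (fun x => H x x) Q) :
    ∫ ω : ι → X, |∑ i, H (ω i) (ω i)| ∂(Measure.pi fun _ => Q)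
      ≤ Fintype.card ι * ∫ x, |H x x| ∂Q := by
  have hint : ∀ i, Integrable (fun ω : ι → X => |H (ω i) (ω i)|) (Measure.pi fun _ => Q) :=
    fun i => (measurePreserving_eval (fun _ => Q) i).integrable_comp_of_integrable hd.abs
  calc ∫ ω : ι → X, |∑ i, H (ω i) (ω i)| ∂(Measure.pi fun _ => Q)
      ≤ ∫ ω : ι → X, ∑ i, |H (ω i) (ω i)| ∂(Measure.pi fun _ => Q) :=
        integral_mono (integrable_sum_diag hd).abs (integrable_finsetSum _ fun i _ => hint i)
          fun ω => abs_sum_le_sum_abs _ _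
    _ = ∑ i : ι, ∫ x, |H x x| ∂Q := by
        rw [integral_finsetSum _ fun i _ => hint i]
        exact sum_congr rfl fun i _ =>
          integral_comp_eval (μ := fun _ => Q) (f := fun x => |H x x|) hd.abs.aestronglyMeasurable
    _ = Fintype.card ι * ∫ x, |H x x| ∂Q := by simp

end DegenerateKernel

section SelfNormalized

variable {ι X : Type*} [Fintype ι] [MeasurableSpace X] {Q : Measure X} [IsProbabilityMeasure Q]
  {H : X → X → ℝ}

lemma measure_sum_lt_half_le [Nonempty ι] {g : X → ℝ} (hg : MemLp g 2 Q)
    (hg1 : ∫ x, g x ∂Q = 1) :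
    (Measure.pi fun _ => Q) {ω : ι → X | ∑ i, g (ω i) < Fintype.card ι / 2}
      ≤ ENNReal.ofReal (4 * Var[g; Q] / Fintype.card ι) := by
  set n : ℝ := (Fintype.card ι : ℝ)
  have hn : 0 < n := by positivity
  have hS : MemLp (∑ i, fun ω : ι → X => g (ω i)) 2 (Measure.pi fun _ => Q) :=
    memLp_finsetSum' _ fun i _ => hg.comp_measurePreserving (measurePreserving_eval _ i)
  have hmean : ∫ ω : ι → X, ∑ i, g (ω i) ∂(Measure.pi fun _ => Q) = n := by
    rw [integral_finsetSum _ fun i _ =>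
      integrable_comp_eval (μ := fun _ => Q) (i := i) (hg.integrable one_le_two)]
    simp [integral_comp_eval (μ := fun _ => Q) hg.1, hg1, n]
  have hvar : Var[∑ i, fun ω : ι → X => g (ω i); Measure.pi fun _ => Q] = n * Var[g; Q] := by
    rw [variance_sum_pi fun _ => hg, sum_const, card_univ, nsmul_eq_mul]
  calc (Measure.pi fun _ => Q) {ω : ι → X | ∑ i, g (ω i) < n / 2}
      ≤ (Measure.pi fun _ => Q) {ω | n / 2 ≤ |(∑ i, fun ω : ι → X => g (ω i)) ω
          - (Measure.pi fun _ => Q)[∑ i, fun ω : ι → X => g (ω i)]|} := by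
        refine measure_mono fun ω hω => ?_
        simp only [Set.mem_ofPred_eq, Finset.sum_apply, hmean] at hω ⊢
        rw [abs_sub_comm, abs_of_pos (by linarith)]
        linarith
    _ ≤ ENNReal.ofReal (n * Var[g; Q] / (n / 2) ^ 2) := by
        rw [← hvar]
        exact meas_ge_le_variance_div_sq hS (by positivity)
    _ = ENNReal.ofReal (4 * Var[g; Q] / n) := by
        congr 1
        field_simp
        ring

lemma measure_lt_mul_div_sq_le [Nonempty ι] [DecidableEq ι] {w : X → ℝ} (hw : MemLp w 2 Q)
    (hw1 : ∫ x, w x ∂Q = 1) (hH : MemLp (uncurry H) 2 (Q.prod Q))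
    (hA : ∀ᵐ a ∂Q, ∫ b, H a b ∂Q = 0) (hB : ∀ᵐ b ∂Q, ∫ a, H a b ∂Q = 0)
    (hd : Integrable (fun x => H x x) Q) {C : ℝ} (hC : 0 < C) :
    (Measure.pi fun _ => Q)
        {ω : ι → X | C < Fintype.card ι * ((∑ i, ∑ j, H (ω i) (ω j)) / (∑ k, w (ω k)) ^ 2)}
      ≤ ENNReal.ofReal (4 * Var[w; Q] / Fintype.card ι + 8 * (∫ x, |H x x| ∂Q) / C
          + 128 * (∫ z, H z.1 z.2 ^ 2 ∂(Q.prod Q)) / C ^ 2) := by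
  set n : ℝ := (Fintype.card ι : ℝ)
  have hn : 0 < n := by positivity
  set D : (ι → X) → ℝ := fun ω => ∑ i, H (ω i) (ω i)
  set F : (ι → X) → ℝ := fun ω => ∑ p ∈ univ.offDiag, H (ω p.1) (ω p.2)
  have hsub : {ω : ι → X | C < n * ((∑ i, ∑ j, H (ω i) (ω j)) / (∑ k, w (ω k)) ^ 2)}
      ⊆ {ω | ∑ i, w (ω i) < n / 2}
        ∪ ({ω | C * n / 8 ≤ |D ω|} ∪ {ω | (C * n / 8) ^ 2 ≤ F ω ^ 2}) := by
    intro ω hω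
    rw [Set.mem_ofPred_eq, sum_sum_eq_sum_add_sum_offDiag] at hω
    rcases lt_or_ge (∑ i, w (ω i)) (n / 2) with hW | hW
    · exact Or.inl hW
    · exact Or.inr (le_abs_or_sq_le_sq_of_lt_mul_div hn hC hW hω)
  have hD : (Measure.pi fun _ => Q) {ω | C * n / 8 ≤ |D ω|}
      ≤ ENNReal.ofReal (8 * (∫ x, |H x x| ∂Q) / C) :=
    (meas_ge_le_ofReal_div_of_integral_le (integrable_sum_diag hd).abs
      (ae_of_all _ fun _ => abs_nonneg _) (by positivity) (integral_abs_sum_diag_le hd))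
      |>.trans_eq (by congr 1; field_simp; ring)
  have hF : (Measure.pi fun _ => Q) {ω | (C * n / 8) ^ 2 ≤ F ω ^ 2}
      ≤ ENNReal.ofReal (128 * (∫ z, H z.1 z.2 ^ 2 ∂(Q.prod Q)) / C ^ 2) :=
    (meas_ge_le_ofReal_div_of_integral_le (memLp_sum_offDiag hH).integrable_sq
      (ae_of_all _ fun _ => sq_nonneg _) (by positivity)
      (integral_sum_offDiag_sq_le hH hA hB)).trans_eq (by congr 1; field_simp; ring)
  calc _ ≤ _ := measure_mono hsub
    _ ≤ _ := (measure_union_le _ _).trans (add_le_add le_rfl (measure_union_le _ _))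
    _ ≤ _ := add_le_add (measure_sum_lt_half_le hw hw1) (add_le_add hD hF)
    _ = _ := by
      have hM : 0 ≤ ∫ x, |H x x| ∂Q := integral_nonneg fun _ => abs_nonneg _
      have hV : 0 ≤ ∫ z, H z.1 z.2 ^ 2 ∂(Q.prod Q) := integral_nonneg fun _ => sq_nonneg _
      have hvar := variance_nonneg w Q
      rw [← ENNReal.ofReal_add (by positivity) (by positivity),
        ← ENNReal.ofReal_add (by positivity) (by positivity), add_assoc]

lemma exists_forall_ge_measure_lt_mul_div_sq_le {w : X → ℝ} (hw : MemLp w 2 Q)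
    (hw1 : ∫ x, w x ∂Q = 1) (hH : MemLp (uncurry H) 2 (Q.prod Q))
    (hA : ∀ᵐ a ∂Q, ∫ b, H a b ∂Q = 0) (hB : ∀ᵐ b ∂Q, ∫ a, H a b ∂Q = 0)
    (hd : Integrable (fun x => H x x) Q) {ε : ℝ} (hε : 0 < ε) :
    ∃ N : ℕ, ∃ C : ℝ, ∀ n ≥ N, (Measure.pi fun _ : Fin n => Q)
      {ω | C < n * ((∑ i, ∑ j, H (ω i) (ω j)) / (∑ k, w (ω k)) ^ 2)} ≤ ENNReal.ofReal ε := by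
  set M := ∫ x, |H x x| ∂Q
  set V := ∫ z, H z.1 z.2 ^ 2 ∂(Q.prod Q)
  obtain ⟨C, hC0, hCε⟩ : ∃ C > 0, 8 * M / C + 128 * V / C ^ 2 < ε / 2 := by
    have hlim : Tendsto (fun C : ℝ => 8 * M / C + 128 * V / C ^ 2) atTop (𝓝 0) := by
      simpa using (tendsto_const_nhds.div_atTop tendsto_id).add
        (tendsto_const_nhds.div_atTop (tendsto_pow_atTop (α := ℝ) two_ne_zero))
    exact ((eventually_gt_atTop 0).and (hlim.eventually (gt_mem_nhds (half_pos hε)))).exists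
  obtain ⟨N, hN⟩ : ∃ N : ℕ, ∀ n ≥ N, 0 < n ∧ 4 * Var[w; Q] / n < ε / 2 :=
    eventually_atTop.1 ((eventually_gt_atTop 0).and
      ((tendsto_const_div_atTop_nhds_zero_nat _).eventually (gt_mem_nhds (half_pos hε))))
  refine ⟨N, C, fun n hn => ?_⟩
  obtain ⟨hn0, hnε⟩ := hN n hn
  have : Nonempty (Fin n) := Fin.pos_iff_nonempty.1 hn0
  have htail := measure_lt_mul_div_sq_le (ι := Fin n) hw hw1 hH hA hB hd hC0
  rw [Fintype.card_fin] at htail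
  exact htail.trans (ENNReal.ofReal_le_ofReal (by linarith))

end SelfNormalized

end ProbabilityTheory


/-- **Lemma of Section B.1**: the empirical kernelized Stein discrepancy of the
self-normalized importance sampling weights `w*_i = w*(x_i)/∑_j w*(x_j)`, for
`x_1, …, x_n` i.i.d. from `Q` and `w* = dP/dQ`, is `O_p(n^{-1})`: the sequence
`n · S({x_i, w*_i}, p)` is bounded in probability. -/
theorem stmt4 {X : Type*} [MeasurableSpace X] (P Q : Measure X)
    [IsProbabilityMeasure P] [IsProbabilityMeasure Q]
    (w : X → ℝ) (hw : Measurable w)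
    (hPQ : P = Q.withDensity (fun x => ENNReal.ofReal (w x)))
    (hwpos : ∀ᵐ x ∂Q, 0 < w x)
    (kp : X → X → ℝ) (hkp : Measurable (Function.uncurry kp))
    (hdeg1 : ∀ᵐ x ∂Q, ∫ x', w x' * kp x x' ∂Q = 0)
    (hdeg2 : ∀ᵐ x' ∂Q, ∫ x, w x * kp x x' ∂Q = 0)
    (hw2 : Integrable (fun x => w x ^ 2) Q)
    (hdiag : Integrable (fun x => w x ^ 2 * kp x x) Q)
    (hprod : Integrable (fun z : X × X => (w z.1 * w z.2 * kp z.1 z.2) ^ 2) (Q.prod Q)) :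
    ∀ ε > 0, ∃ C : ℝ, ∀ n : ℕ,
      (Measure.pi fun _ : Fin n => Q)
        {ω | C < (n : ℝ) * ∑ i, ∑ j,
            (w (ω i) / ∑ k, w (ω k)) * (w (ω j) / ∑ k, w (ω k)) * kp (ω i) (ω j)}
        ≤ ENNReal.ofReal ε := by
  intro ε hε
  subst hPQ
  set H : X → X → ℝ := fun a b => w a * w b * kp a b
  have hH : MemLp (uncurry H) 2 (Q.prod Q) :=
    (memLp_two_iff_integrable_sq (by fun_prop)).2 hprod
  have hA : ∀ᵐ a ∂Q, ∫ b, H a b ∂Q = 0 := by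
    filter_upwards [hdeg1] with a ha
    simp_rw [H, mul_assoc, integral_const_mul, ha, mul_zero]
  have hB : ∀ᵐ b ∂Q, ∫ a, H a b ∂Q = 0 := by
    filter_upwards [hdeg2] with b hb
    have hH_eq : ∀ a, H a b = w b * (w a * kp a b) := fun a => by ring
    simp_rw [hH_eq, integral_const_mul, hb, mul_zero]
  have hd : Integrable (fun x => H x x) Q := hdiag.congr (ae_of_all _ fun x => by ring)
  have hw1 : ∫ x, w x ∂Q = 1 :=
    integral_eq_one_of_withDensity hw.aestronglyMeasurable (hwpos.mono fun _ hx => hx.le)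
  have hwL2 : MemLp w 2 Q := (memLp_two_iff_integrable_sq hw.aestronglyMeasurable).2 hw2
  obtain ⟨N, C, hC⟩ := exists_forall_ge_measure_lt_mul_div_sq_le hwL2 hw1 hH hA hB hd hε
  simp_rw [sum_sum_div_mul_div_mul]
  refine exists_forall_measure_lt_le (fun n => ?_) (ENNReal.ofReal_pos.2 hε) hC
  have hkp' : ∀ i j : Fin n, Measurable fun ω : Fin n → X => kp (ω i) (ω j) :=
    fun i j => hkp.comp (f := fun ω : Fin n → X => (ω i, ω j)) (by fun_prop)
  fun_prop
end

section
/- Let n be even, X a set, and x_1,…,x_n ∈ X. Let w*, h, φ_1,…,φ_L : X → ℝ be functions, D_0 = {1,…,n/2}, D_1 = {n/2+1,…,n}, and k_L(x,y) = ∑_{ℓ=1}^L φ_ℓ(x)φ_ℓ(y). Define β̂_{ℓ,0} = (2/n) ∑_{i∈D_0} h(x_i) φ_ℓ(x_i) w*(x_i), ĥ_{D_0}(x) = ∑_{ℓ=1}^L β̂_{ℓ,0} φ_ℓ(x), Ẑ_0[h] = (2/n) ∑_{i∈D_1} w*(x_i)(h(x_i) − ĥ_{D_0}(x_i)), and symmetrically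 Ẑ_1[h] with the roles of D_0 and D_1 exchanged, and set Ẑ[h] = (Ẑ_0[h] + Ẑ_1[h])/2. Then Ẑ[h] = ∑_{i=1}^n w_i h(x_i), where w_i = (1/n) w*(x_i) − (2/n²) ∑_{j∈D_1} w*(x_i) w*(x_j) k_L(x_j, x_i) for i ∈ D_0, and w_i = (1/n) w*(x_i) − (2/n²) ∑_{j∈D_0} w*(x_i) w*(x_j) k_L(x_j, x_i) for i ∈ D_1. -/
/-!
Substituting the fitted coefficients into `ĥ_{D_0}` and exchanging the order of summation turns
the correction term `∑_{i ∈ D_1} w*(x_i) ĥ_{D_0}(x_i)` into a linear combination of the values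
`h(x_j)`, `j ∈ D_0`, whose coefficients are kernel sums `∑_{i ∈ D_1} w*(x_j) w*(x_i) k_L(x_i, x_j)`.
Averaging the two folds and collecting the coefficient of each `h(x_i)` gives the weights.
-/

open Finset

section CrossFit

variable {ι κ X : Type*} [Fintype κ] (A B : Finset ι) (x : ι → X) (g h : X → ℝ)
  (φ : κ → X → ℝ) (k : X → X → ℝ) (c : ℝ)

theorem sum_mul_seriesFit_eq_kernel_sum (hk : ∀ a b, k a b = ∑ ℓ, φ ℓ a * φ ℓ b) :
    ∑ i ∈ B, g (x i) * ∑ ℓ, (c * ∑ j ∈ A, h (x j) * φ ℓ (x j) * g (x j)) * φ ℓ (x i)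
      = c * ∑ j ∈ A, (∑ i ∈ B, g (x j) * g (x i) * k (x i) (x j)) * h (x j) := by
  simp only [hk, mul_sum, sum_mul]
  conv_lhs => enter [2, i]; rw [sum_comm]
  rw [sum_comm]
  exact sum_congr rfl fun j _ => sum_congr rfl fun i _ => sum_congr rfl fun ℓ _ => by ring

theorem foldEstimate_eq (hk : ∀ a b, k a b = ∑ ℓ, φ ℓ a * φ ℓ b) (β : κ → ℝ)
    (hβ : ∀ ℓ, β ℓ = c * ∑ j ∈ A, h (x j) * φ ℓ (x j) * g (x j))
    (hhat : X → ℝ) (hhat_def : ∀ a, hhat a = ∑ ℓ, β ℓ * φ ℓ a) :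
    c * ∑ i ∈ B, g (x i) * (h (x i) - hhat (x i))
      = ∑ i ∈ B, c * g (x i) * h (x i)
        - ∑ j ∈ A, c ^ 2 * (∑ i ∈ B, g (x j) * g (x i) * k (x i) (x j)) * h (x j) := by
  have hfit := sum_mul_seriesFit_eq_kernel_sum A B x g h φ k c hk
  simp only [← hβ, ← hhat_def] at hfit
  simp only [mul_sub, sum_sub_distrib, hfit]
  simp only [mul_sum, sum_mul]
  congr 1
  · exact sum_congr rfl fun i _ => by ring
  · exact sum_congr rfl fun j _ => sum_congr rfl fun i _ => by ring

theorem crossFitEstimate_eq (hk : ∀ a b, k a b = ∑ ℓ, φ ℓ a * φ ℓ b) (βA βB : κ → ℝ)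
    (hβA : ∀ ℓ, βA ℓ = c * ∑ j ∈ A, h (x j) * φ ℓ (x j) * g (x j))
    (hβB : ∀ ℓ, βB ℓ = c * ∑ j ∈ B, h (x j) * φ ℓ (x j) * g (x j))
    (hhatA hhatB : X → ℝ) (hhatA_def : ∀ a, hhatA a = ∑ ℓ, βA ℓ * φ ℓ a)
    (hhatB_def : ∀ a, hhatB a = ∑ ℓ, βB ℓ * φ ℓ a) :
    (c * ∑ i ∈ B, g (x i) * (h (x i) - hhatA (x i))
        + c * ∑ i ∈ A, g (x i) * (h (x i) - hhatB (x i))) / 2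
      = ∑ i ∈ A, (c / 2 * g (x i)
            - c ^ 2 / 2 * ∑ j ∈ B, g (x i) * g (x j) * k (x j) (x i)) * h (x i)
        + ∑ i ∈ B, (c / 2 * g (x i)
            - c ^ 2 / 2 * ∑ j ∈ A, g (x i) * g (x j) * k (x j) (x i)) * h (x i) := by
  rw [foldEstimate_eq A B x g h φ k c hk βA hβA hhatA hhatA_def,
    foldEstimate_eq B A x g h φ k c hk βB hβB hhatB hhatB_def]
  simp only [sub_mul, sum_sub_distrib, mul_assoc, ← mul_sum]
  ring

end CrossFit

/-- **Lemma B.4** (`lem:defw`) of the paper: the two-fold control-variate estimator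
`Ẑ[h] = (Ẑ_0[h] + Ẑ_1[h])/2` built from a truncated orthogonal series with `L` basis
functions `φ_1, …, φ_L` can be written as a weighted sum `∑_i w_i h(x_i)` with explicit
reference weights `w_i` that do not depend on the test function `h`.  Here `n = 2m`,
the folds are `D_0 = {i < m}` and `D_1 = {i ≥ m}`, and
`k_L(x,y) = ∑_{ℓ} φ_ℓ(x) φ_ℓ(y)`. -/
theorem stmt6 {X : Type*} (m : ℕ) (x : Fin (2 * m) → X)
    (wst h : X → ℝ) (L : ℕ) (φ : Fin L → X → ℝ)
    (kL : X → X → ℝ) (hkL : ∀ a b, kL a b = ∑ ℓ, φ ℓ a * φ ℓ b)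
    (D0 D1 : Finset (Fin (2 * m)))
    (hD0 : D0 = Finset.univ.filter fun i : Fin (2 * m) => (i : ℕ) < m)
    (hD1 : D1 = Finset.univ.filter fun i : Fin (2 * m) => m ≤ (i : ℕ))
    (β0 β1 : Fin L → ℝ)
    (hβ0 : ∀ ℓ, β0 ℓ = (2 / (2 * m : ℝ)) * ∑ i ∈ D0, h (x i) * φ ℓ (x i) * wst (x i))
    (hβ1 : ∀ ℓ, β1 ℓ = (2 / (2 * m : ℝ)) * ∑ i ∈ D1, h (x i) * φ ℓ (x i) * wst (x i))
    (hhat0 hhat1 : X → ℝ)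
    (hhat0_def : ∀ a, hhat0 a = ∑ ℓ, β0 ℓ * φ ℓ a)
    (hhat1_def : ∀ a, hhat1 a = ∑ ℓ, β1 ℓ * φ ℓ a)
    (Z0 Z1 Z : ℝ)
    (hZ0 : Z0 = (2 / (2 * m : ℝ)) * ∑ i ∈ D1, wst (x i) * (h (x i) - hhat0 (x i)))
    (hZ1 : Z1 = (2 / (2 * m : ℝ)) * ∑ i ∈ D0, wst (x i) * (h (x i) - hhat1 (x i)))
    (hZ : Z = (Z0 + Z1) / 2)
    (w : Fin (2 * m) → ℝ)
    (hw : ∀ i, w i =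
      if (i : ℕ) < m then
        (1 / (2 * m : ℝ)) * wst (x i)
          - (2 / (2 * m : ℝ) ^ 2) * ∑ j ∈ D1, wst (x i) * wst (x j) * kL (x j) (x i)
      else
        (1 / (2 * m : ℝ)) * wst (x i)
          - (2 / (2 * m : ℝ) ^ 2) * ∑ j ∈ D0, wst (x i) * wst (x j) * kL (x j) (x i)) :
    Z = ∑ i, w i * h (x i) := by
  have hhalf : (2 / (2 * m : ℝ)) / 2 = 1 / (2 * m : ℝ) := by ring
  have hsq : (2 / (2 * m : ℝ)) ^ 2 / 2 = 2 / (2 * m : ℝ) ^ 2 := by ring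
  have hsplit : ∑ i, w i * h (x i) = ∑ i ∈ D0, w i * h (x i) + ∑ i ∈ D1, w i * h (x i) := by
    rw [hD0, hD1, ← sum_filter_add_sum_filter_not univ (fun i : Fin (2 * m) => (i : ℕ) < m)]
    simp only [not_lt]
  rw [hZ, hZ0, hZ1, crossFitEstimate_eq D0 D1 x wst h φ kL _ hkL β0 β1 hβ0 hβ1 hhat0 hhat1
    hhat0_def hhat1_def, hsplit, hhalf, hsq]
  congr 1 <;> refine sum_congr rfl fun i hi => ?_ <;> rw [hw i]
  · rw [if_pos (by simpa [hD0] using hi)]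
  · rw [if_neg (by simpa [hD1] using hi)]
end

section
/- Let P and Q be probability measures on a measurable space X with P ≪ Q and Radon–Nikodym derivative w* = dP/dQ satisfying 0 ≤ w*(x) ≤ M_3 for all x. Let φ_1,…,φ_L : X → ℝ be measurable with |φ_ℓ(x)|² ≤ M_2 for all ℓ ≤ L and all x, and ∫ φ_ℓ dP = 0 for all ℓ ≤ L; set k_L(x,y) = ∑_{ℓ=1}^L φ_ℓ(x)φ_ℓ(y). Let n be even, x_1,…,x_n i.i.d. with law Q, and for i ∈ D_0 = {1,…,n/2} define the control-variate weight w_i = (1/n) w*(x_i) − (2/n²) ∑_{j∈D_1} w*(x_i) w*(x_j) k_L(x_j, x_i), where D_1 = {n/2+1,…,n} (and symmetrically for i ∈ D_1). Then for every i ≤ n, ℙ( w_i < 0 ) ≤ exp( − n / (4 L² M_2² M_3²) ). -/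
open MeasureTheory Function ProbabilityTheory Finset
open scoped ENNReal NNReal

/-!
Write `f(y, x) = w*(y) k_L(y, x)`. Then `w_i = (w*(x_i) / n) (1 - (1/m) ∑_j f(x_j, x_i))` with `j`
ranging over the opposite fold, so `w_i < 0` forces `∑_j f(x_j, x_i) ≥ m`. Once `x_i` is frozen,
the summands are i.i.d., bounded by `L M₂ M₃` and centred, since `∫ w* φ_ℓ dQ = ∫ φ_ℓ dP = 0`;
Hoeffding's inequality bounds the conditional probability by `exp(-m / (2 L² M₂² M₃²))`, and
integrating over `x_i` keeps the bound.
-/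

section Pi

variable {ι : Type*} [Fintype ι] [DecidableEq ι] {X : ι → Type*} [∀ i, MeasurableSpace (X i)]
  (μ : ∀ i, Measure (X i)) [∀ i, IsProbabilityMeasure (μ i)]

theorem lintegral_pi_eq_lintegral_update {f : (∀ i, X i) → ℝ≥0∞} (hf : Measurable f) (i : ι) :
    ∫⁻ ω, f ω ∂Measure.pi μ = ∫⁻ x, ∫⁻ ω, f (update ω i x) ∂Measure.pi μ ∂μ i := by
  have ω₀ : ∀ j, X j := fun j => (nonempty_of_isProbabilityMeasure (μ j)).some
  have huniv : (univ : Finset ι) = insert i (univ.erase i) := (insert_erase (mem_univ i)).symm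
  have hsplit : ∀ {g : (∀ j, X j) → ℝ≥0∞}, Measurable g → ∫⁻ ω, g ω ∂Measure.pi μ =
      ∫⁻ x, (∫⋯∫⁻_univ.erase i, g ∘ (update · i x) ∂μ) ω₀ ∂μ i := fun hg => by
    rw [lintegral_eq_lmarginal_univ ω₀]
    conv_lhs => rw [huniv, lmarginal_insert _ hg (notMem_erase i _)]
    simp_rw [lmarginal_update_of_notMem hg (notMem_erase i _)]
  rw [hsplit hf]
  refine lintegral_congr fun x => ?_
  rw [hsplit (g := fun ω => f (update ω i x)) (hf.comp measurable_update_left)]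
  simp [comp_def, update_idem]

theorem measure_pi_eq_lintegral_update {A : Set (∀ i, X i)} (hA : MeasurableSet A) (i : ι) :
    Measure.pi μ A = ∫⁻ x, Measure.pi μ ((update · i x) ⁻¹' A) ∂μ i := by
  simp_rw [← lintegral_indicator_one hA, ← lintegral_indicator_one (measurable_update_left hA)]
  exact lintegral_pi_eq_lintegral_update μ (measurable_one.indicator hA) i

end Pi

theorem measure_pi_sum_ge_le {Ω : Type*} [MeasurableSpace Ω] (Q : Measure Ω)
    [IsProbabilityMeasure Q] {ι : Type*} [Fintype ι] {g : Ω → ℝ} (hg : Measurable g) {c : ℝ}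
    (hgc : ∀ y, |g y| ≤ c) (hmean : ∫ y, g y ∂Q = 0) (s : Finset ι) {ε : ℝ} (hε : 0 ≤ ε) :
    Measure.pi (fun _ : ι => Q) {ω | ε ≤ ∑ j ∈ s, g (ω j)}
      ≤ ENNReal.ofReal (Real.exp (-ε ^ 2 / (2 * #s * c ^ 2))) := by
  have hsubG : ∀ j, HasSubgaussianMGF (fun ω : ι → Ω => g (ω j)) ((‖c - -c‖₊ / 2) ^ 2)
      (Measure.pi fun _ => Q) := fun j => by
    refine hasSubgaussianMGF_of_mem_Icc_of_integral_eq_zero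
      (hg.comp (measurable_pi_apply j)).aemeasurable
      (ae_of_all _ fun ω => abs_le.1 (hgc (ω j))) ?_
    rw [integral_comp_eval hg.aestronglyMeasurable, hmean]
  have hparam : ((∑ _j ∈ s, (‖c - -c‖₊ / 2) ^ 2 : ℝ≥0) : ℝ) = #s * c ^ 2 := by
    simp only [sum_const, nsmul_eq_mul, NNReal.coe_mul, NNReal.coe_natCast, NNReal.coe_pow,
      NNReal.coe_div, coe_nnnorm, Real.norm_eq_abs, sub_neg_eq_add, ← two_mul, abs_mul]
    norm_num
  have hoeffding := HasSubgaussianMGF.measure_sum_ge_le_of_iIndepFun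
    (iIndepFun_pi fun _ => hg.aemeasurable) (fun j _ => hsubG j) hε (s := s)
  rw [← ofReal_measureReal]
  refine ENNReal.ofReal_le_ofReal (hoeffding.trans_eq ?_)
  rw [hparam, mul_assoc]

theorem measure_pi_sum_ge_le_of_notMem {Ω : Type*} [MeasurableSpace Ω] (Q : Measure Ω)
    [IsProbabilityMeasure Q] {ι : Type*} [Fintype ι] [DecidableEq ι] {f : Ω → Ω → ℝ}
    (hf : Measurable (uncurry f)) {c : ℝ} (hfc : ∀ y x, |f y x| ≤ c)
    (hmean : ∀ x, ∫ y, f y x ∂Q = 0) {i : ι} {s : Finset ι} (hi : i ∉ s) {ε : ℝ} (hε : 0 ≤ ε) :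
    Measure.pi (fun _ : ι => Q) {ω | ε ≤ ∑ j ∈ s, f (ω j) (ω i)}
      ≤ ENNReal.ofReal (Real.exp (-ε ^ 2 / (2 * #s * c ^ 2))) := by
  have hmeas : MeasurableSet {ω : ι → Ω | ε ≤ ∑ j ∈ s, f (ω j) (ω i)} :=
    measurableSet_le measurable_const <| Finset.measurable_sum _ fun j _ =>
      hf.comp (f := fun ω : ι → Ω => (ω j, ω i))
        ((measurable_pi_apply j).prodMk (measurable_pi_apply i))
  rw [measure_pi_eq_lintegral_update _ hmeas i]
  calc _ ≤ ∫⁻ _x, ENNReal.ofReal (Real.exp (-ε ^ 2 / (2 * #s * c ^ 2))) ∂Q := by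
        refine lintegral_mono fun x => le_of_eq_of_le ?_ <|
          measure_pi_sum_ge_le Q (g := fun y => f y x)
            (hf.comp (f := fun y => (y, x)) (measurable_id.prodMk measurable_const))
            (fun y => hfc y x) (hmean x) s hε
        congr 1
        ext ω
        refine iff_of_eq (congrArg _ (sum_congr rfl fun j hj => ?_))
        simp only [update_self, update_of_ne (ne_of_mem_of_not_mem hj hi)]
    _ = _ := by simp

theorem abs_sum_mul_le_card_mul {ι X : Type*} [Fintype ι] {φ : ι → X → ℝ} {M : ℝ}
    (hφ : ∀ ℓ x, |φ ℓ x| ^ 2 ≤ M) (a b : X) :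
    |∑ ℓ, φ ℓ a * φ ℓ b| ≤ Fintype.card ι * M := by
  calc |∑ ℓ, φ ℓ a * φ ℓ b| ≤ ∑ ℓ, |φ ℓ a * φ ℓ b| := abs_sum_le_sum_abs _ _
    _ ≤ ∑ _ℓ : ι, M := sum_le_sum fun ℓ _ => by
        rw [abs_mul]
        nlinarith [hφ ℓ a, hφ ℓ b, sq_nonneg (|φ ℓ a| - |φ ℓ b|)]
    _ = Fintype.card ι * M := by simp

theorem integral_mul_sum_mul_eq_zero {X ι : Type*} [MeasurableSpace X] (Q : Measure X)
    [IsFiniteMeasure Q] [Fintype ι] {w : X → ℝ} (hw : Measurable w) {M3 : ℝ}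
    (hwbd : ∀ x, |w x| ≤ M3) {φ : ι → X → ℝ} (hφm : ∀ ℓ, Measurable (φ ℓ)) {M2 : ℝ}
    (hφbd : ∀ ℓ x, |φ ℓ x| ^ 2 ≤ M2) (hmean : ∀ ℓ, ∫ y, w y * φ ℓ y ∂Q = 0) (x : X) :
    ∫ y, w y * ∑ ℓ, φ ℓ y * φ ℓ x ∂Q = 0 := by
  have hint : ∀ ℓ, Integrable (fun y => w y * φ ℓ y) Q := fun ℓ =>
    .of_bound (hw.mul (hφm ℓ)).aestronglyMeasurable (M3 * √M2) <| ae_of_all _ fun y => by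
      rw [Real.norm_eq_abs, abs_mul]
      exact mul_le_mul (hwbd y) (Real.abs_le_sqrt ((sq_abs _).symm.trans_le (hφbd ℓ y)))
        (abs_nonneg _) ((abs_nonneg _).trans (hwbd y))
  simp_rw [mul_sum, ← mul_assoc]
  rw [integral_finsetSum _ fun ℓ _ => (hint ℓ).mul_const _]
  simp [integral_mul_const, hmean]

theorem integral_mul_eq_integral_withDensity {X : Type*} [MeasurableSpace X] (Q : Measure X)
    {w : X → ℝ} (hw : Measurable w) (hwnn : ∀ x, 0 ≤ w x) (g : X → ℝ) :
    ∫ x, w x * g x ∂Q = ∫ x, g x ∂Q.withDensity fun x => ENNReal.ofReal (w x) := by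
  rw [integral_withDensity_eq_integral_toReal_smul hw.ennreal_ofReal
    (ae_of_all _ fun _ => ENNReal.ofReal_lt_top)]
  simp [ENNReal.toReal_ofReal (hwnn _)]

theorem le_of_weight_neg {m : ℕ} {a S : ℝ} (ha : 0 ≤ a)
    (h : 1 / (2 * m : ℝ) * a - 2 / (2 * m : ℝ) ^ 2 * (a * S) < 0) : (m : ℝ) ≤ S := by
  rcases eq_or_ne m 0 with rfl | hm
  · simp at h
  have hm' : (0 : ℝ) < m := by positivity
  have hfactor : 1 / (2 * m : ℝ) * a - 2 / (2 * m : ℝ) ^ 2 * (a * S)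
      = a * (m - S) / (2 * m ^ 2) := by
    field_simp
  by_contra! hS
  rw [hfactor] at h
  exact h.not_ge (div_nonneg (mul_nonneg ha (by linarith)) (by positivity))

theorem neg_sq_div_two_mul_mul_sq_eq (m : ℕ) (c : ℝ) :
    -(m : ℝ) ^ 2 / (2 * m * c ^ 2) = -(2 * m : ℝ) / (4 * c ^ 2) := by
  rcases eq_or_ne m 0 with rfl | hm
  · simp
  rcases eq_or_ne c 0 with rfl | hc
  · simp
  field_simp
  ring

theorem card_filter_val_lt_two_mul (m : ℕ) : #{i : Fin (2 * m) | (i : ℕ) < m} = m := by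
  rw [Fin.card_filter_val_lt]
  omega

theorem card_filter_le_val_two_mul (m : ℕ) : #{i : Fin (2 * m) | m ≤ (i : ℕ)} = m := by
  have := card_filter_add_card_filter_not (s := univ) (fun i : Fin (2 * m) => (i : ℕ) < m)
  simp only [not_lt, card_filter_val_lt_two_mul, card_univ, Fintype.card_fin] at this
  omega

theorem measure_weight_neg_le {X ι : Type*} [MeasurableSpace X] (Q : Measure X)
    [IsProbabilityMeasure Q] [Fintype ι] [DecidableEq ι] {w : X → ℝ} (hw : Measurable w)
    {M3 : ℝ} (hwnn : ∀ x, 0 ≤ w x) (hwbd : ∀ x, w x ≤ M3) {L : ℕ} {φ : Fin L → X → ℝ}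
    (hφm : ∀ ℓ, Measurable (φ ℓ)) {M2 : ℝ} (hφbd : ∀ ℓ x, |φ ℓ x| ^ 2 ≤ M2)
    (hmean : ∀ ℓ, ∫ y, w y * φ ℓ y ∂Q = 0) {m : ℕ} {i : ι} {s : Finset ι} (hi : i ∉ s)
    (hs : #s = m) :
    Measure.pi (fun _ : ι => Q) {ω | 1 / (2 * m : ℝ) * w (ω i)
        - 2 / (2 * m : ℝ) ^ 2 * ∑ j ∈ s, w (ω i) * w (ω j) * ∑ ℓ, φ ℓ (ω j) * φ ℓ (ω i) < 0}
      ≤ ENNReal.ofReal (Real.exp (-(2 * m : ℝ) / (4 * (L : ℝ) ^ 2 * M2 ^ 2 * M3 ^ 2))) := by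
  set f : X → X → ℝ := fun y x => w y * ∑ ℓ, φ ℓ y * φ ℓ x
  have hfm : Measurable (uncurry f) :=
    (hw.comp measurable_fst).mul <| Finset.measurable_sum _ fun ℓ _ =>
      ((hφm ℓ).comp measurable_fst).mul ((hφm ℓ).comp measurable_snd)
  have hfc : ∀ y x, |f y x| ≤ L * M2 * M3 := fun y x => by
    rw [abs_mul, abs_of_nonneg (hwnn y), mul_comm]
    simpa using mul_le_mul (abs_sum_mul_le_card_mul hφbd y x) (hwbd y) (hwnn y)
      ((abs_nonneg _).trans (abs_sum_mul_le_card_mul hφbd y x))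
  have hfmean : ∀ x, ∫ y, f y x ∂Q = 0 :=
    integral_mul_sum_mul_eq_zero Q hw (fun x => (abs_of_nonneg (hwnn x)).trans_le (hwbd x))
      hφm hφbd hmean
  calc _ ≤ Measure.pi (fun _ : ι => Q) {ω | (m : ℝ) ≤ ∑ j ∈ s, f (ω j) (ω i)} := by
        refine measure_mono fun ω hω => le_of_weight_neg (hwnn (ω i)) ?_
        simpa only [Set.mem_ofPred_eq, f, mul_sum, mul_assoc] using hω
    _ ≤ _ := measure_pi_sum_ge_le_of_notMem Q hfm hfc hfmean hi (Nat.cast_nonneg m)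
    _ = _ := by rw [hs, neg_sq_div_two_mul_mul_sq_eq]; ring_nf

theorem stmt12_general {X : Type*} [MeasurableSpace X] (P Q : Measure X)
    [IsProbabilityMeasure Q]
    (w : X → ℝ) (hw : Measurable w) (M3 : ℝ)
    (hwnn : ∀ x, 0 ≤ w x) (hwbd : ∀ x, w x ≤ M3)
    (hPQ : P = Q.withDensity fun x => ENNReal.ofReal (w x))
    (L : ℕ) (φ : Fin L → X → ℝ) (hφm : ∀ ℓ, Measurable (φ ℓ)) (M2 : ℝ)
    (hφbd : ∀ ℓ x, |φ ℓ x| ^ 2 ≤ M2)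
    (hφmean : ∀ ℓ, ∫ x, φ ℓ x ∂P = 0)
    (kL : X → X → ℝ) (hkL : ∀ a b, kL a b = ∑ ℓ, φ ℓ a * φ ℓ b)
    (m : ℕ) (D0 D1 : Finset (Fin (2 * m)))
    (hD0 : D0 = Finset.univ.filter fun i : Fin (2 * m) => (i : ℕ) < m)
    (hD1 : D1 = Finset.univ.filter fun i : Fin (2 * m) => m ≤ (i : ℕ))
    (W : (Fin (2 * m) → X) → Fin (2 * m) → ℝ)
    (hW : ∀ ω i, W ω i =
      if (i : ℕ) < m then
        (1 / (2 * m : ℝ)) * w (ω i)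
          - (2 / (2 * m : ℝ) ^ 2) * ∑ j ∈ D1, w (ω i) * w (ω j) * kL (ω j) (ω i)
      else
        (1 / (2 * m : ℝ)) * w (ω i)
          - (2 / (2 * m : ℝ) ^ 2) * ∑ j ∈ D0, w (ω i) * w (ω j) * kL (ω j) (ω i)) :
    ∀ i : Fin (2 * m),
      (Measure.pi fun _ : Fin (2 * m) => Q) {ω | W ω i < 0}
        ≤ ENNReal.ofReal
            (Real.exp (-(2 * m : ℝ) / (4 * (L : ℝ) ^ 2 * M2 ^ 2 * M3 ^ 2))) := by
  intro i
  obtain rfl : kL = fun a b => ∑ ℓ, φ ℓ a * φ ℓ b := funext₂ hkL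
  have hmean : ∀ ℓ, ∫ y, w y * φ ℓ y ∂Q = 0 := fun ℓ => by
    rw [integral_mul_eq_integral_withDensity Q hw hwnn, ← hPQ, hφmean]
  obtain ⟨s, hi, hs, hWs⟩ : ∃ s, i ∉ s ∧ #s = m ∧ ∀ ω, W ω i = 1 / (2 * m : ℝ) * w (ω i)
      - 2 / (2 * m : ℝ) ^ 2 * ∑ j ∈ s, w (ω i) * w (ω j) * ∑ ℓ, φ ℓ (ω j) * φ ℓ (ω i) := by
    by_cases him : (i : ℕ) < m
    · exact ⟨D1, by simp [hD1, him], hD1 ▸ card_filter_le_val_two_mul m,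
        fun ω => by simp [hW, him]⟩
    · exact ⟨D0, by simp [hD0, him], hD0 ▸ card_filter_val_lt_two_mul m,
        fun ω => by simp [hW, him]⟩
  simp_rw [hWs]
  exact measure_weight_neg_le Q hw hwnn hwbd hφm hφbd hmean hi hs

/-- **Part (i) of Lemma B.6** (`lem:ineq`) of the paper: each control-variate reference
weight `w_i` is negative with exponentially small probability,
`ℙ(w_i < 0) ≤ exp(−n / (4 L² M₂² M₃²))`, where `n = 2m`, `0 ≤ w* ≤ M₃`,
`|φ_ℓ(x)|² ≤ M₂` and `∫ φ_ℓ dP = 0` for the `L` basis functions, and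
`k_L(x,y) = ∑_ℓ φ_ℓ(x) φ_ℓ(y)`. -/
theorem stmt12 {X : Type*} [MeasurableSpace X] (P Q : Measure X)
    [IsProbabilityMeasure P] [IsProbabilityMeasure Q]
    (w : X → ℝ) (hw : Measurable w) (M3 : ℝ)
    (hwnn : ∀ x, 0 ≤ w x) (hwbd : ∀ x, w x ≤ M3)
    (hPQ : P = Q.withDensity fun x => ENNReal.ofReal (w x))
    (L : ℕ) (φ : Fin L → X → ℝ) (hφm : ∀ ℓ, Measurable (φ ℓ)) (M2 : ℝ)
    (hφbd : ∀ ℓ x, |φ ℓ x| ^ 2 ≤ M2)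
    (hφmean : ∀ ℓ, ∫ x, φ ℓ x ∂P = 0)
    (kL : X → X → ℝ) (hkL : ∀ a b, kL a b = ∑ ℓ, φ ℓ a * φ ℓ b)
    (m : ℕ) (D0 D1 : Finset (Fin (2 * m)))
    (hD0 : D0 = Finset.univ.filter fun i : Fin (2 * m) => (i : ℕ) < m)
    (hD1 : D1 = Finset.univ.filter fun i : Fin (2 * m) => m ≤ (i : ℕ))
    (W : (Fin (2 * m) → X) → Fin (2 * m) → ℝ)
    (hW : ∀ ω i, W ω i =
      if (i : ℕ) < m then
        (1 / (2 * m : ℝ)) * w (ω i)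
          - (2 / (2 * m : ℝ) ^ 2) * ∑ j ∈ D1, w (ω i) * w (ω j) * kL (ω j) (ω i)
      else
        (1 / (2 * m : ℝ)) * w (ω i)
          - (2 / (2 * m : ℝ) ^ 2) * ∑ j ∈ D0, w (ω i) * w (ω j) * kL (ω j) (ω i)) :
    ∀ i : Fin (2 * m),
      (Measure.pi fun _ : Fin (2 * m) => Q) {ω | W ω i < 0}
        ≤ ENNReal.ofReal
            (Real.exp (-(2 * m : ℝ) / (4 * (L : ℝ) ^ 2 * M2 ^ 2 * M3 ^ 2))) :=
  stmt12_general P Q w hw M3 hwnn hwbd hPQ L φ hφm M2 hφbd hφmean kL hkL m D0 D1 hD0 hD1 W hW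
end
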